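/- Hellinger-distance lower bound between quantal responses. Let Q, Q̃ : B → ℝ with ν = ν_Q, ν̃ = ν_{Q̃}, and suppose B_A > 0 satisfies ‖A_Q‖_∞ ≤ B_A and ‖A_{Q̃}‖_∞ ≤ B_A. Then D_H²(ν, ν̃) ≥ (η² / (8·(1 + ηB_A)²))·Σ_{b∈B} ν(b)·(A_{Q̃}(b) − A_Q(b))². -/
import Mathlib


open Finset

noncomputable section

namespace QSE7

variable {B : Type*} [Fintype B]

/-- Soft value `V(Q) = η⁻¹ log Σ_b exp(η Q b)`. -/
def softVal (η : ℝ) (Q : B → ℝ) : ℝ := η⁻¹ * Real.log (∑ b, Real.exp (η * Q b))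

/-- Advantage `A_Q(b) = Q b − V(Q)`. -/
def adv (η : ℝ) (Q : B → ℝ) (b : B) : ℝ := Q b - softVal η Q

/-- Quantal response `ν_Q(b) = exp(η A_Q(b))`. -/
def qres (η : ℝ) (Q : B → ℝ) (b : B) : ℝ := Real.exp (η * adv η Q b)

/-- Squared Hellinger distance between (densities of) distributions on `B`. -/
def dH2 (p q : B → ℝ) : ℝ := (1 / 2) * ∑ b, (Real.sqrt (p b) - Real.sqrt (q b)) ^ 2

lemma key_ineq (c x : ℝ) (hc : 0 ≤ c) (hx : |x| ≤ c) :
    x ^ 2 / (1 + c) ^ 2 ≤ (Real.exp x - 1) ^ 2 := by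
  have h1 : |x| ≤ (1 + |x|) * |Real.exp x - 1| := by
    rcases le_or_gt 0 x with h | h
    · have h2 := Real.add_one_le_exp x
      have h3 : |Real.exp x - 1| = Real.exp x - 1 := abs_of_nonneg (by linarith)
      rw [h3, abs_of_nonneg h]
      nlinarith [abs_nonneg x]
    · have he1 : Real.exp x < 1 := by
        rw [← Real.exp_zero]; exact Real.exp_lt_exp.mpr h
      have h2 : 1 + (-x) ≤ Real.exp (-x) := by linarith [Real.add_one_le_exp (-x)]
      have h3 : Real.exp x * Real.exp (-x) = 1 := by
        rw [← Real.exp_add]; simp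
      have hpos := Real.exp_pos x
      rw [abs_of_neg h, abs_of_nonpos (by linarith)]
      nlinarith
  have habs : |x| ≤ |Real.exp x - 1| * (1 + c) := by
    have hle : (1 + |x|) ≤ 1 + c := by linarith
    nlinarith [abs_nonneg (Real.exp x - 1), abs_nonneg x]
  have hc1 : (0:ℝ) < (1 + c) ^ 2 := by positivity
  rw [div_le_iff₀ hc1]
  calc x ^ 2 = |x| ^ 2 := (sq_abs x).symm
    _ ≤ (|Real.exp x - 1| * (1 + c)) ^ 2 := by nlinarith [abs_nonneg x]
    _ = (Real.exp x - 1) ^ 2 * (1 + c) ^ 2 := by rw [mul_pow, sq_abs]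

/-- Hellinger-distance lower bound between quantal responses:
`D_H²(ν,ν̃) ≥ (η²/(8(1+ηB_A)²)) Σ_b ν(b)(A_{Q̃}(b) − A_Q(b))²`. -/
theorem hellinger_lower_bound_quantal
    {B : Type*} [Fintype B] [Nonempty B]
    (η : ℝ) (hη : 0 < η) (Q Qt : B → ℝ) (BA : ℝ) (hBA : 0 < BA)
    (hA : ∀ b, |adv η Q b| ≤ BA) (hAt : ∀ b, |adv η Qt b| ≤ BA) :
    dH2 (qres η Q) (qres η Qt) ≥
      η ^ 2 / (8 * (1 + η * BA) ^ 2) *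
        ∑ b, qres η Q b * (adv η Qt b - adv η Q b) ^ 2 := by
  have hcpos : 0 < η * BA := mul_pos hη hBA
  have hpt : ∀ b, qres η Q b * (adv η Qt b - adv η Q b) ^ 2 * (η ^ 2 / (4 * (1 + η * BA) ^ 2))
      ≤ (Real.sqrt (qres η Q b) - Real.sqrt (qres η Qt b)) ^ 2 := by
    intro b
    set δ := adv η Qt b - adv η Q b with hδdef
    have h1 := abs_le.mp (hA b)
    have h2 := abs_le.mp (hAt b)
    have hδ : |η * δ / 2| ≤ η * BA := by
      rw [abs_le]
      constructor <;> rw [hδdef] <;> nlinarith [h1.1, h1.2, h2.1, h2.2]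
    have hkey := key_ineq (η * BA) (η * δ / 2) hcpos.le hδ
    have hsplit : (Real.sqrt (qres η Q b) - Real.sqrt (qres η Qt b)) ^ 2
        = qres η Q b * (Real.exp (η * δ / 2) - 1) ^ 2 := by
      have e1 : Real.exp (η * adv η Qt b / 2)
          = Real.exp (η * adv η Q b / 2) * Real.exp (η * δ / 2) := by
        rw [← Real.exp_add]; congr 1; rw [hδdef]; ring
      have e2 : Real.exp (η * adv η Q b)
          = Real.exp (η * adv η Q b / 2) * Real.exp (η * adv η Q b / 2) := by
        rw [← Real.exp_add]; congr 1; ring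
      rw [qres, qres, ← Real.exp_half, ← Real.exp_half, e1]
      rw [e2]; ring
    rw [hsplit]
    have hq : 0 ≤ qres η Q b := (Real.exp_pos _).le
    have : (η * δ / 2) ^ 2 / (1 + η * BA) ^ 2
        = δ ^ 2 * (η ^ 2 / (4 * (1 + η * BA) ^ 2)) := by
      have h0 : (1 + η * BA) ≠ 0 := by positivity
      field_simp; ring
    rw [this] at hkey
    calc qres η Q b * δ ^ 2 * (η ^ 2 / (4 * (1 + η * BA) ^ 2))
        = qres η Q b * (δ ^ 2 * (η ^ 2 / (4 * (1 + η * BA) ^ 2))) := by ring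
      _ ≤ qres η Q b * (Real.exp (η * δ / 2) - 1) ^ 2 :=
          mul_le_mul_of_nonneg_left hkey hq
  have hsum : ∑ b, qres η Q b * (adv η Qt b - adv η Q b) ^ 2 * (η ^ 2 / (4 * (1 + η * BA) ^ 2))
      ≤ ∑ b, (Real.sqrt (qres η Q b) - Real.sqrt (qres η Qt b)) ^ 2 :=
    Finset.sum_le_sum fun b _ => hpt b
  rw [dH2, ge_iff_le]
  calc η ^ 2 / (8 * (1 + η * BA) ^ 2) * ∑ b, qres η Q b * (adv η Qt b - adv η Q b) ^ 2
      = (1 / 2) * ∑ b, qres η Q b * (adv η Qt b - adv η Q b) ^ 2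
          * (η ^ 2 / (4 * (1 + η * BA) ^ 2)) := by
        rw [Finset.mul_sum, Finset.mul_sum]
        refine Finset.sum_congr rfl fun b _ => ?_
        have h0 : (1 + η * BA) ≠ 0 := by positivity
        field_simp; ring
    _ ≤ (1 / 2) * ∑ b, (Real.sqrt (qres η Q b) - Real.sqrt (qres η Qt b)) ^ 2 :=
        mul_le_mul_of_nonneg_left hsum (by norm_num)

end QSE7
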